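/- For u,v ∈ (ℤ/dℤ)^n and x ∈ (ℤ/dℤ)^{2n}, writing σ_n = Σ_{y,z} α_{y,z} |Ψ_y⟩⟨Ψ_z|, one has T_x(|u⟩⟨v| ⊗ σ_n)T_x† = d^{−2n} |Ψ'_x⟩⟨Ψ'_x| ⊗ Σ_{y,z} α_{y,z} ω^{⟨x, y−z⟩} N_y |u⟩⟨v| N_z†, where T_x = |Ψ'_x⟩⟨Ψ'_x| ⊗ N_x. -/

import Mathlib

open Matrix Kronecker BigOperators Finset ComplexOrder

noncomputable def Xmat (d : ℕ) : Matrix (ZMod d) (ZMod d) ℂ :=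
  Matrix.of fun r c => if r = c - 1 then 1 else 0

noncomputable def Zmat (d : ℕ) (ω : ℂ) : Matrix (ZMod d) (ZMod d) ℂ :=
  Matrix.of fun r c => if r = c then ω ^ c.val else 0

/-- The Weyl operator `N_(i,j) = X^i Z^j`. -/
noncomputable def weyl (d : ℕ) [NeZero d] (ω : ℂ) (u : ZMod d × ZMod d) : Matrix (ZMod d) (ZMod d) ℂ :=
  Xmat d ^ u.1.val * Zmat d ω ^ u.2.val

/-- Tensor-product Weyl operator on `H^{⊗n}`. -/
noncomputable def weylT (d n : ℕ) [NeZero d] (ω : ℂ) (x : Fin n → ZMod d × ZMod d) :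
    Matrix (Fin n → ZMod d) (Fin n → ZMod d) ℂ :=
  Matrix.of fun m l => ∏ i, weyl d ω (x i) (m i) (l i)

/-- Symplectic form on `(ℤ/d)^{2n}`. -/
def symp {d n : ℕ} (y y' : Fin n → ZMod d × ZMod d) : ZMod d :=
  ∑ i, ((y i).1 * (y' i).2 - (y i).2 * (y' i).1)

/-- Generalized Bell vector `|Ψ_y⟩ = d^{-n/2} ∑_l |l⟩ ⊗ N_y |l⟩`. -/
noncomputable def bell (d n : ℕ) [NeZero d] (ω : ℂ) (y : Fin n → ZMod d × ZMod d) :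
    (Fin n → ZMod d) × (Fin n → ZMod d) → ℂ :=
  fun p => (Real.sqrt (d ^ n) : ℂ)⁻¹ * weylT d n ω y p.2 p.1

/-- `|Ψ'_x⟩ = d^{-n/2} ∑_l N_x |l⟩ ⊗ |l⟩`. -/
noncomputable def bell' (d n : ℕ) [NeZero d] (ω : ℂ) (x : Fin n → ZMod d × ZMod d) :
    (Fin n → ZMod d) × (Fin n → ZMod d) → ℂ :=
  fun p => (Real.sqrt (d ^ n) : ℂ)⁻¹ * weylT d n ω x p.1 p.2

/-- `⟨Ψ_x| σ |Ψ_x⟩`. -/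
noncomputable def braket (d n : ℕ) [NeZero d] (ω : ℂ)
    (σ : Matrix ((Fin n → ZMod d) × (Fin n → ZMod d)) ((Fin n → ZMod d) × (Fin n → ZMod d)) ℂ)
    (x : Fin n → ZMod d × ZMod d) : ℂ :=
  dotProduct (star (bell d n ω x)) (σ.mulVec (bell d n ω x))

/-- The teleportation channel `Λ_σ(ρ) = ∑_x ⟨Ψ_x|σ|Ψ_x⟩ N_x ρ N_x†`. -/
noncomputable def telechan (d n : ℕ) [NeZero d] (ω : ℂ)
    (σ : Matrix ((Fin n → ZMod d) × (Fin n → ZMod d)) ((Fin n → ZMod d) × (Fin n → ZMod d)) ℂ)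
    (ρ : Matrix (Fin n → ZMod d) (Fin n → ZMod d) ℂ) :
    Matrix (Fin n → ZMod d) (Fin n → ZMod d) ℂ :=
  ∑ x : Fin n → ZMod d × ZMod d, braket d n ω σ x • (weylT d n ω x * ρ * (weylT d n ω x)ᴴ)

/-- Kraus operator `T_x = |Ψ'_x⟩⟨Ψ'_x| ⊗ N_x` on `(T⊗A)⊗B`. -/
noncomputable def kraus (d n : ℕ) [NeZero d] (ω : ℂ) (x : Fin n → ZMod d × ZMod d) :
    Matrix (((Fin n → ZMod d) × (Fin n → ZMod d)) × (Fin n → ZMod d))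
           (((Fin n → ZMod d) × (Fin n → ZMod d)) × (Fin n → ZMod d)) ℂ :=
  Matrix.of fun p q => bell' d n ω x p.1 * star (bell' d n ω x q.1) * weylT d n ω x p.2 q.2

/-- `ρ ⊗ σ` on `(T⊗A)⊗B` (ρ on T, σ on A⊗B). -/
noncomputable def tensorTAB (d n : ℕ)
    (ρ : Matrix (Fin n → ZMod d) (Fin n → ZMod d) ℂ)
    (σ : Matrix ((Fin n → ZMod d) × (Fin n → ZMod d)) ((Fin n → ZMod d) × (Fin n → ZMod d)) ℂ) :
    Matrix (((Fin n → ZMod d) × (Fin n → ZMod d)) × (Fin n → ZMod d))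
           (((Fin n → ZMod d) × (Fin n → ZMod d)) × (Fin n → ZMod d)) ℂ :=
  Matrix.of fun p q => ρ p.1.1 q.1.1 * σ (p.1.2, p.2) (q.1.2, q.2)

/-- Partial trace over the first two subsystems (T and A). -/
noncomputable def ptraceTA (d n : ℕ) [NeZero d]
    (M : Matrix (((Fin n → ZMod d) × (Fin n → ZMod d)) × (Fin n → ZMod d))
               (((Fin n → ZMod d) × (Fin n → ZMod d)) × (Fin n → ZMod d)) ℂ) :
    Matrix (Fin n → ZMod d) (Fin n → ZMod d) ℂ :=
  Matrix.of fun b b' => ∑ t : Fin n → ZMod d, ∑ a : Fin n → ZMod d, M ((t, a), b) ((t, a), b')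

/-!
The Weyl operators commute up to a phase given by the symplectic form:
`N_x N_y N_x† = ω^⟨x,y⟩ N_y`, already for a single qudit and hence for tensor products.
Since `|Ψ_y⟩ = d^{-n/2} ∑_l |l⟩ ⊗ N_y|l⟩`, contracting `|u⟩ ⊗ |Ψ_y⟩` against `⟨Ψ'_x| ⊗ N_x` produces
exactly the matrix entries of `N_x N_y N_x†`, so
`T_x (|u⟩ ⊗ |Ψ_y⟩) = d^{-n} ω^⟨x,y⟩ |Ψ'_x⟩ ⊗ N_y|u⟩`.
Conjugating the rank-one operator `|u⟩⟨v| ⊗ |Ψ_y⟩⟨Ψ_z|` by `T_x` gives the outer product of two such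
images, and the statement follows by linearity in `σ`.
-/

lemma AddChar.map_sum_eq_prod {A M ι : Type*} [AddCommMonoid A] [CommMonoid M] (ψ : AddChar A M)
    (s : Finset ι) (f : ι → A) : ψ (∑ i ∈ s, f i) = ∏ i ∈ s, ψ (f i) :=
  map_prod ψ.toMonoidHom (fun i => Multiplicative.ofAdd (f i)) s

section Weyl

variable {d : ℕ} [NeZero d] {ω : ℂ}

lemma star_zmodChar (hω : ω ^ d = 1) (a : ZMod d) :
    star (AddChar.zmodChar d hω a) = AddChar.zmodChar d hω (-a) :=
  (AddChar.map_neg_eq_conj _ a).symm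

lemma Xmat_pow_apply (k : ℕ) (r c : ZMod d) :
    (Xmat d ^ k) r c = if c = r + k then 1 else 0 := by
  induction k generalizing c with
  | zero => simp [one_apply, eq_comm]
  | succ k ih =>
    rw [pow_succ, mul_apply]
    simp_rw [ih]
    simp [Xmat, ← sub_eq_iff_eq_add, sub_sub, add_comm (1 : ZMod d)]

lemma Zmat_pow_apply (k : ℕ) (r c : ZMod d) :
    (Zmat d ω ^ k) r c = if c = r then ω ^ (k * c.val) else 0 := by
  induction k generalizing c with
  | zero => simp [one_apply, eq_comm]
  | succ k ih =>
    rw [pow_succ, mul_apply]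
    simp_rw [ih]
    split_ifs with h <;> simp [Zmat, h, add_mul, pow_add]

lemma weyl_apply (hω : ω ^ d = 1) (a : ZMod d × ZMod d) (r c : ZMod d) :
    weyl d ω a r c = if c = r + a.1 then AddChar.zmodChar d hω (c * a.2) else 0 := by
  simp [weyl, mul_apply, Zmat_pow_apply, Xmat_pow_apply,
    AddChar.zmodChar_apply, ZMod.val_mul, ← pow_eq_pow_mod _ hω, mul_comm a.2.val]

lemma weyl_mul_weyl_mul_conjTranspose (hω : ω ^ d = 1) (a b : ZMod d × ZMod d) :
    weyl d ω a * weyl d ω b * (weyl d ω a)ᴴ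
      = AddChar.zmodChar d hω (a.1 * b.2 - a.2 * b.1) • weyl d ω b := by
  ext r c
  rw [mul_apply, sum_eq_single (c + a.1)]
  · simp only [mul_apply, weyl_apply hω, mul_ite, ite_mul, ← AddChar.map_add_eq_mul, zero_mul,
      mul_zero, conjTranspose_apply, ↓reduceIte, star_zmodChar hω, Matrix.smul_apply, smul_eq_mul]
    simp_rw [← ite_and, and_comm (a := _ = _ + b.1), ite_and]
    have hcond : c + a.1 = r + a.1 + b.1 ↔ c = r + b.1 := by rw [add_right_comm r, add_left_inj]
    simp only [sum_ite_eq', mem_univ, if_true, hcond, ite_mul, zero_mul]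
    split_ifs with h
    · rw [← AddChar.map_add_eq_mul, h]; congr 1; ring
    · rfl
  · intro m _ hm
    simp [weyl_apply hω, hm]
  · simp

end Weyl

section PiKronecker

variable {ι m n R : Type*} [Fintype ι]

def piKronecker [CommMonoid R] (f : ι → Matrix m n R) : Matrix (ι → m) (ι → n) R :=
  of fun a b => ∏ i, f i (a i) (b i)

lemma piKronecker_mul [DecidableEq ι] [Fintype n] [CommSemiring R] {o : Type*}
    (f : ι → Matrix m n R) (g : ι → Matrix n o R) :
    piKronecker f * piKronecker g = piKronecker fun i => f i * g i := by
  ext a b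
  simp only [piKronecker, mul_apply, of_apply, ← prod_mul_distrib, prod_univ_sum,
    Fintype.piFinset_univ]

lemma conjTranspose_piKronecker [CommMonoid R] [StarMul R] (f : ι → Matrix m n R) :
    (piKronecker f)ᴴ = piKronecker fun i => (f i)ᴴ := by
  ext a b
  simp [piKronecker]

lemma piKronecker_smul [CommMonoid R] (c : ι → R) (f : ι → Matrix m n R) :
    piKronecker (fun i => c i • f i) = (∏ i, c i) • piKronecker f := by
  ext a b
  simp [piKronecker, prod_mul_distrib]

end PiKronecker

section WeylT

variable {d n : ℕ} [NeZero d] {ω : ℂ}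

lemma weylT_eq_piKronecker (x : Fin n → ZMod d × ZMod d) :
    weylT d n ω x = piKronecker fun i => weyl d ω (x i) := rfl

lemma weylT_mul_weylT_mul_conjTranspose (hω : ω ^ d = 1) (x y : Fin n → ZMod d × ZMod d) :
    weylT d n ω x * weylT d n ω y * (weylT d n ω x)ᴴ
      = AddChar.zmodChar d hω (symp x y) • weylT d n ω y := by
  simp only [weylT_eq_piKronecker, conjTranspose_piKronecker, piKronecker_mul,
    weyl_mul_weyl_mul_conjTranspose hω, piKronecker_smul, symp, AddChar.map_sum_eq_prod]

lemma zmodChar_symp_sub (hω : ω ^ d = 1) (x y z : Fin n → ZMod d × ZMod d) :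
    AddChar.zmodChar d hω (symp x (y - z))
      = AddChar.zmodChar d hω (symp x y) * star (AddChar.zmodChar d hω (symp x z)) := by
  have : symp x (y - z) = symp x y + -symp x z := by
    simp only [symp, ← sum_neg_distrib, ← sum_add_distrib, Pi.sub_apply, Prod.fst_sub,
      Prod.snd_sub]
    exact sum_congr rfl fun i _ => by ring
  rw [this, AddChar.map_add_eq_mul, star_zmodChar]

end WeylT

lemma Matrix.mul_vecMulVec_mul_conjTranspose {l m n α : Type*} [Fintype m] [Fintype n]
    [CommSemiring α] [StarRing α] (A : Matrix l m α) (B : Matrix n m α) (f g : m → α) :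
    A * vecMulVec f g * Bᴴ = vecMulVec (A *ᵥ f) (star (B *ᵥ star g)) := by
  rw [mul_vecMulVec, vecMulVec_mul, star_mulVec, star_star]

lemma Complex.inv_ofReal_sqrt_mul_self {x : ℝ} (hx : 0 ≤ x) :
    ((Real.sqrt x : ℂ))⁻¹ * ((Real.sqrt x : ℂ))⁻¹ = (x : ℂ)⁻¹ := by
  rw [← mul_inv, ← Complex.ofReal_mul, Real.mul_self_sqrt hx]

def tensorTABVec {α β γ : Type*} (a : α → ℂ) (b : β × γ → ℂ) : (α × β) × γ → ℂ :=
  fun r => a r.1.1 * b (r.1.2, r.2)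

lemma star_tensorTABVec {α β γ : Type*} (a : α → ℂ) (b : β × γ → ℂ) :
    star (tensorTABVec a b) = tensorTABVec (star a) (star b) :=
  funext fun _ => star_mul' _ _

section TensorTAB

variable {d n : ℕ}

lemma tensorTAB_vecMulVec (a b : (Fin n → ZMod d) → ℂ)
    (c e : (Fin n → ZMod d) × (Fin n → ZMod d) → ℂ) :
    tensorTAB d n (vecMulVec a b) (vecMulVec c e)
      = vecMulVec (tensorTABVec a c) (tensorTABVec b e) := by
  ext p q
  simp only [tensorTAB, tensorTABVec, of_apply, vecMulVec_apply]
  ring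

lemma tensorTAB_sum {ι : Type*} (s : Finset ι) (ρ : Matrix (Fin n → ZMod d) (Fin n → ZMod d) ℂ)
    (σ : ι → Matrix ((Fin n → ZMod d) × (Fin n → ZMod d))
      ((Fin n → ZMod d) × (Fin n → ZMod d)) ℂ) :
    tensorTAB d n ρ (∑ i ∈ s, σ i) = ∑ i ∈ s, tensorTAB d n ρ (σ i) := by
  ext p q
  simp only [tensorTAB, of_apply, Matrix.sum_apply, mul_sum]

lemma tensorTAB_smul (c : ℂ) (ρ : Matrix (Fin n → ZMod d) (Fin n → ZMod d) ℂ)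
    (σ : Matrix ((Fin n → ZMod d) × (Fin n → ZMod d)) ((Fin n → ZMod d) × (Fin n → ZMod d)) ℂ) :
    tensorTAB d n ρ (c • σ) = c • tensorTAB d n ρ σ := by
  ext p q
  simp only [tensorTAB, of_apply, Matrix.smul_apply, smul_eq_mul]
  ring

end TensorTAB

section Teleportation

variable {d n : ℕ} [NeZero d] {ω : ℂ}

lemma sum_star_bell'_mul_weylT_mul_bell (hω : ω ^ d = 1) (x y : Fin n → ZMod d × ZMod d)
    (u p : Fin n → ZMod d) :
    ∑ a, ∑ b, star (bell' d n ω x (u, a)) * weylT d n ω x p b * bell d n ω y (a, b)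
      = (((d : ℂ) ^ n)⁻¹ * AddChar.zmodChar d hω (symp x y)) * weylT d n ω y p u := by
  have hnorm :
      star ((Real.sqrt (d ^ n) : ℂ))⁻¹ * ((Real.sqrt (d ^ n) : ℂ))⁻¹ = ((d : ℂ) ^ n)⁻¹ := by
    rw [star_inv₀, Complex.star_def, Complex.conj_ofReal,
      Complex.inv_ofReal_sqrt_mul_self (by positivity)]
    push_cast; rfl
  calc ∑ a, ∑ b, star (bell' d n ω x (u, a)) * weylT d n ω x p b * bell d n ω y (a, b)
      = ((d : ℂ) ^ n)⁻¹ * (weylT d n ω x * weylT d n ω y * (weylT d n ω x)ᴴ) p u := by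
        simp only [bell, bell', mul_apply, conjTranspose_apply, ← hnorm, star_mul', mul_sum,
          sum_mul]
        exact sum_congr rfl fun b _ => sum_congr rfl fun a _ => by ring
    _ = _ := by
        rw [weylT_mul_weylT_mul_conjTranspose hω, Matrix.smul_apply, smul_eq_mul, mul_assoc]

lemma kraus_mulVec_tensorTABVec_single_bell (hω : ω ^ d = 1) (x y : Fin n → ZMod d × ZMod d)
    (u : Fin n → ZMod d) :
    kraus d n ω x *ᵥ tensorTABVec (Pi.single u 1) (bell d n ω y)
      = (((d : ℂ) ^ n)⁻¹ * AddChar.zmodChar d hω (symp x y)) •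
          fun p => bell' d n ω x p.1 * weylT d n ω y p.2 u := by
  ext p
  simp only [mulVec, dotProduct, Fintype.sum_prod_type, kraus, tensorTABVec, of_apply,
    Pi.single_apply, ite_mul, one_mul, zero_mul, mul_ite, mul_zero]
  rw [Fintype.sum_eq_single u fun t ht => by simp only [ht, if_false, sum_const_zero]]
  simp only [if_true]
  calc ∑ a, ∑ b, bell' d n ω x p.1 * star (bell' d n ω x (u, a)) * weylT d n ω x p.2 b
          * bell d n ω y (a, b)
      = bell' d n ω x p.1 *
          ∑ a, ∑ b, star (bell' d n ω x (u, a)) * weylT d n ω x p.2 b * bell d n ω y (a, b) := by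
        simp only [mul_sum, mul_assoc]
    _ = _ := by
        rw [sum_star_bell'_mul_weylT_mul_bell hω, Pi.smul_apply, smul_eq_mul]
        ring

lemma kraus_mul_tensorTAB_single_bell_mul_conjTranspose (hω : ω ^ d = 1) (u v : Fin n → ZMod d)
    (x y z : Fin n → ZMod d × ZMod d) :
    kraus d n ω x * tensorTAB d n (single u v 1) (vecMulVec (bell d n ω y) (star (bell d n ω z)))
        * (kraus d n ω x)ᴴ
      = (((d : ℂ) ^ (2 * n))⁻¹ * ω ^ (symp x (y - z)).val) • of fun p q =>
          bell' d n ω x p.1 * star (bell' d n ω x q.1) *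
            (weylT d n ω y * single u v 1 * (weylT d n ω z)ᴴ :
              Matrix (Fin n → ZMod d) (Fin n → ZMod d) ℂ) p.2 q.2 := by
  have hsingle : star (Pi.single v 1 : (Fin n → ZMod d) → ℂ) = Pi.single v 1 := by
    rw [← Pi.single_star, star_one]
  simp only [single_eq_single_vecMulVec_single, tensorTAB_vecMulVec,
    mul_vecMulVec_mul_conjTranspose, star_tensorTABVec, hsingle, star_star,
    kraus_mulVec_tensorTABVec_single_bell hω, mulVec_single_one]
  ext p q
  simp only [vecMulVec_apply, Matrix.smul_apply, of_apply, Pi.star_apply, Pi.smul_apply,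
    smul_eq_mul, star_mul', col_apply, ← AddChar.zmodChar_apply hω, zmodChar_symp_sub hω,
    star_inv₀, star_pow, star_natCast]
  ring

end Teleportation

theorem stmt9_general (d n : ℕ) [NeZero d] (ω : ℂ) (hω : IsPrimitiveRoot ω d)
    (σ : Matrix ((Fin n → ZMod d) × (Fin n → ZMod d)) ((Fin n → ZMod d) × (Fin n → ZMod d)) ℂ)
    (α : (Fin n → ZMod d × ZMod d) → (Fin n → ZMod d × ZMod d) → ℂ)
    (hσ : σ = ∑ y : Fin n → ZMod d × ZMod d, ∑ z : Fin n → ZMod d × ZMod d,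
      α y z • Matrix.vecMulVec (bell d n ω y) (star (bell d n ω z)))
    (u v : Fin n → ZMod d) (x : Fin n → ZMod d × ZMod d) :
    kraus d n ω x * tensorTAB d n (Matrix.single u v 1) σ * (kraus d n ω x)ᴴ
      = ((d : ℂ) ^ (2 * n))⁻¹ • Matrix.of
          (fun p q : ((Fin n → ZMod d) × (Fin n → ZMod d)) × (Fin n → ZMod d) =>
          bell' d n ω x p.1 * star (bell' d n ω x q.1) *
            (∑ y : Fin n → ZMod d × ZMod d, ∑ z : Fin n → ZMod d × ZMod d,
              α y z * ω ^ (symp x (y - z)).val *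
                ((weylT d n ω y * Matrix.single u v 1 * (weylT d n ω z)ᴴ :
                  Matrix (Fin n → ZMod d) (Fin n → ZMod d) ℂ) p.2 q.2))) := by
  subst hσ
  simp only [tensorTAB_sum, tensorTAB_smul, Matrix.mul_sum, Matrix.sum_mul, Matrix.mul_smul,
    Matrix.smul_mul, kraus_mul_tensorTAB_single_bell_mul_conjTranspose hω.pow_eq_one]
  ext p q
  simp only [Matrix.sum_apply, Matrix.smul_apply, of_apply, smul_eq_mul, mul_sum]
  exact sum_congr rfl fun y _ => sum_congr rfl fun z _ => by ring

/-- `T_x (|u⟩⟨v| ⊗ σ_n) T_x† = d^{−2n} |Ψ'_x⟩⟨Ψ'_x| ⊗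
∑_{y,z} α_{y,z} ω^{⟨x,y−z⟩} N_y |u⟩⟨v| N_z†` for `σ_n = ∑_{y,z} α_{y,z}|Ψ_y⟩⟨Ψ_z|`. -/
theorem stmt9 (d n : ℕ) [NeZero d] (hd : 2 ≤ d) (ω : ℂ) (hω : IsPrimitiveRoot ω d)
    (σ : Matrix ((Fin n → ZMod d) × (Fin n → ZMod d)) ((Fin n → ZMod d) × (Fin n → ZMod d)) ℂ)
    (α : (Fin n → ZMod d × ZMod d) → (Fin n → ZMod d × ZMod d) → ℂ)
    (hσ : σ = ∑ y : Fin n → ZMod d × ZMod d, ∑ z : Fin n → ZMod d × ZMod d,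
      α y z • Matrix.vecMulVec (bell d n ω y) (star (bell d n ω z)))
    (u v : Fin n → ZMod d) (x : Fin n → ZMod d × ZMod d) :
    kraus d n ω x * tensorTAB d n (Matrix.single u v 1) σ * (kraus d n ω x)ᴴ
      = ((d : ℂ) ^ (2 * n))⁻¹ • Matrix.of
          (fun p q : ((Fin n → ZMod d) × (Fin n → ZMod d)) × (Fin n → ZMod d) =>
          bell' d n ω x p.1 * star (bell' d n ω x q.1) *
            (∑ y : Fin n → ZMod d × ZMod d, ∑ z : Fin n → ZMod d × ZMod d,
              α y z * ω ^ (symp x (y - z)).val *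
                ((weylT d n ω y * Matrix.single u v 1 * (weylT d n ω z)ᴴ :
                  Matrix (Fin n → ZMod d) (Fin n → ZMod d) ℂ) p.2 q.2))) :=
  stmt9_general d n ω hω σ α hσ u v x
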